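/- arXiv:1711.04615 — 2 statements merged into one kernel-verified Lean document; each statement's English description precedes it below -/
import Mathlib

section
/- For events A, B, C with P̲(C) ≠ 0: P̲(A ∪ B | C) ≥ P̲(A | C) + P̲(B | C) − P̲(A ∩ B | C), where P̲(E | C) = P̲(E ∩ C)/P̲(C). -/
/-! `T⁺` commutes with intersections and is monotone, so the lower probability
`A ↦ P(T⁺ A)` is 2-monotone: `T⁺(A ∪ B)` contains `T⁺ A ∪ T⁺ B` and `T⁺(A ∩ B) = T⁺ A ∩ T⁺ B`,
whence inclusion–exclusion for `P` gives `P̲ A + P̲ B ≤ P̲ (A ∪ B) + P̲ (A ∩ B)`.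
Applied to `A ∩ C` and `B ∩ C` and divided by `P̲ C ≥ 0`, this is the claim. -/

open MeasureTheory Set

def Tplus {X : Type*} (T : X → Set X) (A : Set X) : Set X := {x | T x ⊆ A}
def Tinv {X : Type*} (T : X → Set X) (A : Set X) : Set X := {x | (T x ∩ A).Nonempty}

section Tplus

variable {X : Type*} (T : X → Set X)

theorem Tplus_inter (A B : Set X) : Tplus T (A ∩ B) = Tplus T A ∩ Tplus T B := by
  ext x
  exact subset_inter_iff

theorem Tplus_mono {A B : Set X} (h : A ⊆ B) : Tplus T A ⊆ Tplus T B :=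
  fun _ hx => hx.trans h

theorem Tplus_union_subset (A B : Set X) : Tplus T A ∪ Tplus T B ⊆ Tplus T (A ∪ B) :=
  union_subset (Tplus_mono T subset_union_left) (Tplus_mono T subset_union_right)

end Tplus

theorem measureReal_add_le_of_union_subset {X : Type*} [MeasurableSpace X] {μ : Measure X}
    [IsFiniteMeasure μ] {s t u : Set X} (ht : NullMeasurableSet t μ) (h : s ∪ t ⊆ u) :
    μ.real s + μ.real t ≤ μ.real u + μ.real (s ∩ t) := by
  rw [← measureReal_union_add_inter₀ ht]
  exact add_le_add_left (measureReal_mono h) _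

theorem lowerProb_add_le_union_add_inter {X : Type*} [MeasurableSpace X] (P : Measure X)
    [IsFiniteMeasure P] (T : X → Set X) {A B : Set X}
    (hB : NullMeasurableSet (Tplus T B) P) :
    P.real (Tplus T A) + P.real (Tplus T B) ≤ P.real (Tplus T (A ∪ B)) + P.real (Tplus T (A ∩ B)) := by
  rw [Tplus_inter]
  exact measureReal_add_le_of_union_subset hB (Tplus_union_subset T A B)

theorem stmt12_general {X : Type*} [MeasurableSpace X] (P : Measure X) [IsProbabilityMeasure P]
    (T : X → Set X) (A B C : Set X)
    (hB : MeasurableSet (Tplus T (B ∩ C))) :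
    (P (Tplus T ((A ∪ B) ∩ C))).toReal / (P (Tplus T C)).toReal ≥
      (P (Tplus T (A ∩ C))).toReal / (P (Tplus T C)).toReal
      + (P (Tplus T (B ∩ C))).toReal / (P (Tplus T C)).toReal
      - (P (Tplus T (A ∩ B ∩ C))).toReal / (P (Tplus T C)).toReal := by
  have key := lowerProb_add_le_union_add_inter P T (A := A ∩ C) hB.nullMeasurableSet
  rw [← union_inter_distrib_right, ← inter_inter_distrib_right] at key
  rw [ge_iff_le, ← add_div, ← sub_div]
  exact div_le_div_of_nonneg_right (by simpa only [measureReal_def] using sub_le_iff_le_add.mpr key)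
    ENNReal.toReal_nonneg

theorem stmt12 {X : Type*} [MeasurableSpace X] (P : Measure X) [IsProbabilityMeasure P]
    (T : X → Set X) (hT : ∀ x, (T x).Nonempty) (A B C : Set X)
    (hA : MeasurableSet (Tplus T (A ∩ C))) (hB : MeasurableSet (Tplus T (B ∩ C)))
    (hC : (P (Tplus T C)).toReal ≠ 0) :
    (P (Tplus T ((A ∪ B) ∩ C))).toReal / (P (Tplus T C)).toReal ≥
      (P (Tplus T (A ∩ C))).toReal / (P (Tplus T C)).toReal
      + (P (Tplus T (B ∩ C))).toReal / (P (Tplus T C)).toReal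
      - (P (Tplus T (A ∩ B ∩ C))).toReal / (P (Tplus T C)).toReal :=
  stmt12_general P T A B C hB
end

section
/- For events A, B, C with P̄(C) ≠ 0: P̄(A ∪ B | C) ≤ P̄(A | C) + P̄(B | C) − P̄(A ∩ B | C), where P̄(E | C) = P̄(E ∩ C)/P̄(C). -/
open MeasureTheory Set

/-!
The preimage `Tinv T` commutes with unions and sends intersections into intersections, and a
measure is submodular on arbitrary sets (replace one set by a measurable hull of the same measure).
Hence `A ↦ P (Tinv T A)` is submodular; applied to `A ∩ C` and `B ∩ C` and divided by the
nonnegative number `P (Tinv T C)` this is the inequality.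
-/

theorem MeasureTheory.measure_union_add_inter_le {α : Type*} [MeasurableSpace α] (μ : Measure α)
    (s t : Set α) : μ (s ∪ t) + μ (s ∩ t) ≤ μ s + μ t :=
  calc μ (s ∪ t) + μ (s ∩ t)
      ≤ μ (s ∪ toMeasurable μ t) + μ (s ∩ toMeasurable μ t) := by
        gcongr <;> exact subset_toMeasurable μ t
    _ = μ s + μ t := by
        rw [measure_union_add_inter s (measurableSet_toMeasurable μ t), measure_toMeasurable]

section SetValuedPreimage

variable {X : Type*} (T : X → Set X)

theorem Tinv_mono {A B : Set X} (h : A ⊆ B) : Tinv T A ⊆ Tinv T B :=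
  fun _ ⟨y, hyT, hyA⟩ => ⟨y, hyT, h hyA⟩

theorem Tinv_union (A B : Set X) : Tinv T (A ∪ B) = Tinv T A ∪ Tinv T B := by
  ext x
  simp only [Tinv, mem_ofPred_eq, mem_union, inter_union_distrib_left, union_nonempty]

theorem Tinv_inter_subset (A B : Set X) : Tinv T (A ∩ B) ⊆ Tinv T A ∩ Tinv T B :=
  subset_inter (Tinv_mono T inter_subset_left) (Tinv_mono T inter_subset_right)

theorem measure_Tinv_union_add_inter_le [MeasurableSpace X] (μ : Measure X) (A B : Set X) :
    μ (Tinv T (A ∪ B)) + μ (Tinv T (A ∩ B)) ≤ μ (Tinv T A) + μ (Tinv T B) :=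
  calc μ (Tinv T (A ∪ B)) + μ (Tinv T (A ∩ B))
      ≤ μ (Tinv T A ∪ Tinv T B) + μ (Tinv T A ∩ Tinv T B) := by
        rw [Tinv_union]
        gcongr
        exact Tinv_inter_subset T A B
    _ ≤ μ (Tinv T A) + μ (Tinv T B) := measure_union_add_inter_le μ _ _

theorem measureReal_Tinv_union_add_inter_le [MeasurableSpace X] (μ : Measure X)
    [IsFiniteMeasure μ] (A B : Set X) :
    μ.real (Tinv T (A ∪ B)) + μ.real (Tinv T (A ∩ B)) ≤ μ.real (Tinv T A) + μ.real (Tinv T B) := by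
  simp only [measureReal_def]
  rw [← ENNReal.toReal_add (measure_ne_top _ _) (measure_ne_top _ _),
    ← ENNReal.toReal_add (measure_ne_top _ _) (measure_ne_top _ _)]
  exact ENNReal.toReal_mono (by finiteness) (measure_Tinv_union_add_inter_le T μ A B)

end SetValuedPreimage

theorem stmt13_general {X : Type*} [MeasurableSpace X] (P : Measure X) [IsProbabilityMeasure P]
    (T : X → Set X) (A B C : Set X) :
    (P (Tinv T ((A ∪ B) ∩ C))).toReal / (P (Tinv T C)).toReal ≤
      (P (Tinv T (A ∩ C))).toReal / (P (Tinv T C)).toReal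
      + (P (Tinv T (B ∩ C))).toReal / (P (Tinv T C)).toReal
      - (P (Tinv T (A ∩ B ∩ C))).toReal / (P (Tinv T C)).toReal := by
  have hsubmod := measureReal_Tinv_union_add_inter_le T P (A ∩ C) (B ∩ C)
  rw [← union_inter_distrib_right, ← inter_inter_distrib_right] at hsubmod
  simp only [measureReal_def] at hsubmod
  rw [← add_div, ← sub_div]
  exact div_le_div_of_nonneg_right (by linarith) ENNReal.toReal_nonneg

theorem stmt13 {X : Type*} [MeasurableSpace X] (P : Measure X) [IsProbabilityMeasure P]
    (T : X → Set X) (hT : ∀ x, (T x).Nonempty) (A B C : Set X)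
    (hA : MeasurableSet (Tinv T (A ∩ C))) (hB : MeasurableSet (Tinv T (B ∩ C)))
    (hC : (P (Tinv T C)).toReal ≠ 0) :
    (P (Tinv T ((A ∪ B) ∩ C))).toReal / (P (Tinv T C)).toReal ≤
      (P (Tinv T (A ∩ C))).toReal / (P (Tinv T C)).toReal
      + (P (Tinv T (B ∩ C))).toReal / (P (Tinv T C)).toReal
      - (P (Tinv T (A ∩ B ∩ C))).toReal / (P (Tinv T C)).toReal :=
  stmt13_general P T A B C
end
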